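/- arXiv:1711.01514 — 3 statements merged into one kernel-verified Lean document; each statement's English description precedes it below -/
import Mathlib

section
/- In dimension d = 1, form cells by first taking the pairwise disjoint, ordered, bounded intervals I_1(i_1), each containing the single value v_1(i_1), and then merging each maximal block of contiguous cells all of whose data points belong entirely to one common cluster ℓ (i.e., n(i_1) = n_ℓ(i_1) throughout the block); index merged cells by i'_1 and let n_ℓ(i'_1) be the number of points of cluster ℓ in merged cell C(i'_1). Suppose the dither X̃ is generated by drawing a cluster L with P(L = ℓ) = n_ℓ/n and, given L = ℓ, drawing X̃ from any distribution with continuous (atomless) conditional distribution on each merged cell that satisfies P(X̃ ∈ C(i'_1) | L = ℓ) = n_ℓ(i'_1)/n_ℓ for all i'_1 (no uniformity on cells is assumed). Then the output X̂ = G(F_{X̃}(X̃)), where F_{X̃} is the CDF of X̃ and G is the generalized inverse of the empirical CDF, satisfies: conditioned on L = ℓ, X̂ = v_1(i_1) with probability n_ℓ(i_1)/n_ℓ; i.e., the procedure is equivalent to resampling with replacement from the cluster's values with their within-cluster empirical frequencies. -/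
/-
Write `U = F(X̃)` and let `C` be the merged cell of `I_1(i_1)`. Since `X̃` has no atoms, `U` is
uniform on `[0, 1]`, and `G(U) = v_1(i_1)` exactly when `U` lies in
`(#{x < v_1(i_1)}/n, #{x ≤ v_1(i_1)}/n]`. By the hypothesis on merged cells, the mass of `X̃` in
the merged cells left of any merged cell equals the empirical mass of the data in those cells; so,
up to null sets, `X̃` lies in a merged cell exactly when `U` lies in the slice of `(0, 1]` that the
empirical CDF gives to the data of that cell. If `C` is a single original cell, its slice is the
one of `v_1(i_1)` and the claim is the hypothesis on `C`. Otherwise `C` is owned by one cluster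
`ℓ₀`, so `L = ℓ₀` almost surely when `X̃ ∈ C`, and the event has probability `#{x = v_1(i_1)}/n`
on `L = ℓ₀` and `0` on the other clusters.
-/

open MeasureTheory ProbabilityTheory Set Filter Function
open scoped ENNReal Finset

namespace ProbabilityTheory

variable {μ : Measure ℝ} [IsProbabilityMeasure μ] [NullSingletonClass μ]

lemma continuous_cdf : Continuous (cdf μ) := by
  refine continuous_iff_continuousAt.2 fun a => continuousAt_iff_continuous_left_right.2
    ⟨?_, (cdf μ).right_continuous a⟩
  have hjump : ENNReal.ofReal (cdf μ a - leftLim (cdf μ) a) = 0 := by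
    rw [← StieltjesFunction.measure_singleton, measure_cdf, measure_singleton]
  have hleft : leftLim (cdf μ) a = cdf μ a :=
    le_antisymm ((monotone_cdf μ).leftLim_le le_rfl)
      (sub_nonpos.1 (ENNReal.ofReal_eq_zero.1 hjump))
  exact continuousWithinAt_Iio_iff_Iic.1
    ((monotone_cdf μ).continuousWithinAt_Iio_iff_leftLim_eq.2 hleft)

lemma measure_cdf_le {u : ℝ} (hu0 : 0 ≤ u) (hu1 : u ≤ 1) :
    μ {t | cdf μ t ≤ u} = ENNReal.ofReal u := by
  rcases hu1.eq_or_lt with rfl | hu1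
  · simp [cdf_le_one]
  set S := {t | cdf μ t ≤ u}
  obtain ⟨T, hT⟩ := eventually_atTop.1 ((tendsto_cdf_atTop μ).eventually (lt_mem_nhds hu1))
  have hbdd : BddAbove S := ⟨T, fun t ht => le_of_not_gt fun hTt => (hT t hTt.le).not_ge ht⟩
  rcases S.eq_empty_or_nonempty with hS | hS
  · have hu : u ≤ 0 := le_of_not_gt fun hu => by
      obtain ⟨t, ht⟩ := ((tendsto_cdf_atBot μ).eventually (gt_mem_nhds hu)).exists
      exact hS.subset ht.le
    rw [hS, measure_empty, ENNReal.ofReal_of_nonpos hu]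
  have hmem : sSup S ∈ S := (isClosed_le continuous_cdf continuous_const).csSup_mem hS hbdd
  have hIic : S = Iic (sSup S) :=
    Subset.antisymm (fun t ht => le_csSup hbdd ht) fun t ht => (monotone_cdf μ ht).trans hmem
  rw [hIic, ← ofReal_cdf]
  refine congrArg ENNReal.ofReal (le_antisymm hmem ?_)
  obtain ⟨t, ht⟩ : u ∈ range (cdf μ) := mem_range_of_exists_le_of_exists_ge continuous_cdf
    ⟨hS.some, hS.some_mem⟩ ⟨T, (hT T le_rfl).le⟩
  exact ht ▸ monotone_cdf μ (le_csSup hbdd ht.le)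

theorem map_cdf : μ.map (cdf μ) = volume.restrict (Icc 0 1) := by
  refine Measure.ext_of_Iic _ _ fun u => ?_
  rw [Measure.map_apply (monotone_cdf μ).measurable measurableSet_Iic,
    Measure.restrict_apply measurableSet_Iic]
  change μ {t | cdf μ t ≤ u} = _
  have hinter : Iic u ∩ Icc 0 1 = Icc 0 (min u 1) := by
    ext t; simp only [mem_inter_iff, mem_Iic, mem_Icc, le_min_iff]; tauto
  rw [hinter, Real.volume_Icc, sub_zero]
  rcases lt_or_ge u 0 with hu | hu0
  · have : {t | cdf μ t ≤ u} = ∅ := eq_empty_of_forall_notMem fun t ht =>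
      (cdf_nonneg μ t).not_gt (lt_of_le_of_lt ht hu)
    rw [this, measure_empty, ENNReal.ofReal_of_nonpos (min_le_left _ _ |>.trans hu.le)]
  rcases le_or_gt u 1 with hu1 | hu1
  · rw [min_eq_left hu1, measure_cdf_le hu0 hu1]
  · rw [min_eq_right hu1.le, ENNReal.ofReal_one, ← measure_univ (μ := μ)]
    exact congrArg μ (eq_univ_of_forall fun t => (cdf_le_one μ t).trans hu1.le)

lemma ae_cdf_ne (c : ℝ) : ∀ᵐ t ∂μ, cdf μ t ≠ c := by
  refine ae_iff.2 ?_
  simp only [ne_eq, not_not]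
  change μ (cdf μ ⁻¹' {c}) = 0
  rw [← Measure.map_apply (monotone_cdf μ).measurable (measurableSet_singleton c), map_cdf,
    Measure.restrict_apply (measurableSet_singleton c)]
  exact measure_mono_null inter_subset_left Real.volume_singleton

lemma measure_cdf_mem_Ioc {a b : ℝ} (ha : 0 ≤ a) (hb : b ≤ 1) :
    μ {t | cdf μ t ∈ Ioc a b} = ENNReal.ofReal (b - a) := by
  change μ (cdf μ ⁻¹' Ioc a b) = _
  rw [← Measure.map_apply (monotone_cdf μ).measurable measurableSet_Ioc, map_cdf,
    Measure.restrict_apply measurableSet_Ioc,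
    inter_eq_left.2 (Ioc_subset_Icc_self.trans (Icc_subset_Icc ha hb)), Real.volume_Ioc]

lemma ae_cdf_mem_Ioc : ∀ᵐ t ∂μ, cdf μ t ∈ Ioc 0 1 :=
  (ae_cdf_ne 0).mono fun t ht => ⟨(cdf_nonneg μ t).lt_of_ne' ht, cdf_le_one μ t⟩

end ProbabilityTheory

section EmpiricalQuantile

variable {n : ℕ} (x : Fin n → ℝ)

noncomputable def empiricalQuantile (u : ℝ) : ℝ :=
  sInf {s : ℝ | u ≤ (#{i | x i ≤ s} : ℝ) / n}

variable {x}

lemma empiricalQuantile_eq_of_mem_Ioc {a u : ℝ}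
    (hu : u ∈ Ioc ((#{i | x i < a} : ℝ) / n) ((#{i | x i ≤ a} : ℝ) / n)) :
    empiricalQuantile x u = a := by
  refine IsLeast.csInf_eq ⟨hu.2, fun s hs => le_of_not_gt fun hsa => hu.1.not_ge ?_⟩
  have hcard : #{i | x i ≤ s} ≤ #{i | x i < a} := Finset.card_le_card fun i hi =>
    Finset.mem_filter.2 ⟨Finset.mem_univ i, (Finset.mem_filter.1 hi).2.trans_lt hsa⟩
  exact hs.trans (div_le_div_of_nonneg_right (by exact_mod_cast hcard) n.cast_nonneg)

lemma exists_mem_Ioc_card_div (hn : 0 < n) {u : ℝ} (hu : u ∈ Ioc 0 1) :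
    ∃ i, u ∈ Ioc ((#{k | x k < x i} : ℝ) / n) ((#{k | x k ≤ x i} : ℝ) / n) := by
  set T := ({i | u ≤ (#{k | x k ≤ x i} : ℝ) / n} : Finset (Fin n))
  have hT : T.Nonempty := by
    obtain ⟨i, -, hi⟩ := Finset.univ.exists_max_image x ⟨⟨0, hn⟩, Finset.mem_univ _⟩
    refine ⟨i, Finset.mem_filter.2 ⟨Finset.mem_univ _, ?_⟩⟩
    rw [Finset.filter_true_of_mem fun k _ => hi k (Finset.mem_univ k), Finset.card_univ,
      Fintype.card_fin, div_self (by exact_mod_cast hn.ne')]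
    exact hu.2
  obtain ⟨i, hiT, hmin⟩ := T.exists_min_image x hT
  refine ⟨i, lt_of_not_ge fun hle => ?_, (Finset.mem_filter.1 hiT).2⟩
  have hne : ({k | x k < x i} : Finset (Fin n)).Nonempty := by
    refine Finset.nonempty_iff_ne_empty.2 fun h => ?_
    rw [h, Finset.card_empty, Nat.cast_zero, zero_div] at hle
    exact hu.1.not_ge hle
  obtain ⟨k, hk, hkmax⟩ := Finset.exists_max_image _ x hne
  have hk' : x k < x i := (Finset.mem_filter.1 hk).2
  have hcard : ({m | x m ≤ x k} : Finset (Fin n)) = ({m | x m < x i} : Finset (Fin n)) :=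
    Finset.filter_congr fun m _ => ⟨fun h => h.trans_lt hk',
      fun h => hkmax m (Finset.mem_filter.2 ⟨Finset.mem_univ _, h⟩)⟩
  exact hk'.not_ge (hmin k (Finset.mem_filter.2 ⟨Finset.mem_univ _, hcard ▸ hle⟩))

lemma empiricalQuantile_eq_iff (hn : 0 < n) {a u : ℝ} (hu : u ∈ Ioc 0 1) :
    empiricalQuantile x u = a ↔
      u ∈ Ioc ((#{i | x i < a} : ℝ) / n) ((#{i | x i ≤ a} : ℝ) / n) := by
  refine ⟨fun h => ?_, empiricalQuantile_eq_of_mem_Ioc⟩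
  obtain ⟨i, hi⟩ := exists_mem_Ioc_card_div hn hu
  rwa [← h, empiricalQuantile_eq_of_mem_Ioc hi]

end EmpiricalQuantile

lemma ENNReal.natCast_div_mul_div_cancel {a N : ℕ} (h : a ≤ N) (d : ℝ≥0∞) :
    (a : ℝ≥0∞) / N * (N / d) = a / d := by
  rw [← mul_div_assoc, ENNReal.div_mul_cancel' (fun hN => by simp_all) (by simp)]

section MonotoneFiber

variable {α β : Type*} [LinearOrder α] [LinearOrder β] {B : α → β}

lemma Monotone.apply_lt_iff_of_fiber_singleton (hB : Monotone B) {j : α}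
    (hj : ∀ j', B j' = B j → j' = j) (j' : α) : B j' < B j ↔ j' < j :=
  ⟨hB.reflect_lt, fun h => (hB h.le).lt_of_ne fun heq => h.ne (hj j' heq)⟩

lemma Monotone.apply_le_iff_of_fiber_singleton (hB : Monotone B) {j : α}
    (hj : ∀ j', B j' = B j → j' = j) (j' : α) : B j' ≤ B j ↔ j' ≤ j :=
  ⟨fun h => le_of_not_gt fun hlt => hlt.ne' (hj j' (h.antisymm (hB hlt.le))), fun h => hB h⟩

end MonotoneFiber

section Cells

variable {n : ℕ} {κ : Type*} [DecidableEq κ] {α : Type*} [MeasurableSpace α] {ν : Measure α}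
  {C : κ → Set α} {f : Fin n → κ}

lemma measure_biUnion_eq_card_div (hCm : ∀ k, MeasurableSet (C k))
    (hCd : Pairwise (Disjoint on C)) (hν : ∀ k, ν (C k) = #{i | f i = k} / n)
    (S : Finset κ) : ν (⋃ k ∈ S, C k) = #{i | f i ∈ S} / n := by
  rw [measure_biUnion_finset (hCd.set_pairwise _) fun k _ => hCm k,
    ← Finset.sum_card_fiberwise_eq_card_filter, Nat.cast_sum, div_eq_mul_inv, Finset.sum_mul]
  exact Finset.sum_congr rfl fun k _ => (hν k).trans (div_eq_mul_inv _ _)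

lemma measure_compl_iUnion_eq_zero [Fintype κ] [IsProbabilityMeasure ν] (hn : 0 < n)
    (hCm : ∀ k, MeasurableSet (C k)) (hCd : Pairwise (Disjoint on C))
    (hν : ∀ k, ν (C k) = #{i | f i = k} / n) : ν (⋃ k, C k)ᶜ = 0 := by
  have h := measure_biUnion_eq_card_div hCm hCd hν Finset.univ
  simp only [Finset.mem_univ, iUnion_true, Finset.filter_true, Finset.card_univ,
    Fintype.card_fin] at h
  rw [prob_compl_eq_zero_iff (.iUnion hCm), h]
  exact ENNReal.div_self (Nat.cast_ne_zero.2 hn.ne') (ENNReal.natCast_ne_top n)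

end Cells

section OrderedCells

variable {κ : Type*} [LinearOrder κ] {C : κ → Set ℝ}

lemma pairwise_disjoint_of_forall_lt (hC : ∀ β β', β < β' → ∀ s ∈ C β, ∀ t ∈ C β', s < t) :
    Pairwise (Disjoint on C) := by
  intro β β' hne
  refine Set.disjoint_left.2 fun t h h' => ?_
  rcases hne.lt_or_gt with hlt | hlt
  · exact lt_irrefl t (hC _ _ hlt t h t h')
  · exact lt_irrefl t (hC _ _ hlt t h' t h)

variable [Fintype κ] {n : ℕ} {ν : Measure ℝ} [IsProbabilityMeasure ν] {blk : Fin n → κ}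

lemma cdf_mem_Icc_of_mem_cell (hn : 0 < n) (hCm : ∀ β, MeasurableSet (C β))
    (hC : ∀ β β', β < β' → ∀ s ∈ C β, ∀ t ∈ C β', s < t)
    (hν : ∀ β, ν (C β) = #{i | blk i = β} / n) {β : κ} {t : ℝ} (ht : t ∈ C β) :
    cdf ν t ∈ Icc ((#{i | blk i < β} : ℝ) / n) ((#{i | blk i ≤ β} : ℝ) / n) := by
  have hCd := pairwise_disjoint_of_forall_lt hC
  have hunion := measure_biUnion_eq_card_div hCm hCd hν
  have htoReal : ∀ m : ℕ, ((m : ℝ≥0∞) / n).toReal = (m : ℝ) / n := fun m => by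
    simp [ENNReal.toReal_div]
  rw [cdf_eq_real, measureReal_def]
  constructor
  · have hsub : (⋃ β' ∈ ({β' | β' < β} : Finset κ), C β') ⊆ Iic t := by
      simp only [Finset.mem_filter, Finset.mem_univ, true_and, iUnion_subset_iff]
      exact fun β' hβ' s hs => (hC β' β hβ' s hs t ht).le
    have := ENNReal.toReal_mono (measure_ne_top ν _) (measure_mono (μ := ν) hsub)
    rw [hunion, htoReal] at this
    simpa only [Finset.mem_filter, Finset.mem_univ, true_and] using this
  · have hsub : Iic t ⊆ (⋃ β' ∈ ({β' | β' ≤ β} : Finset κ), C β') ∪ (⋃ β', C β')ᶜ := by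
      intro s hs
      by_cases hmem : s ∈ ⋃ β', C β'
      · obtain ⟨β', hs'⟩ := mem_iUnion.1 hmem
        refine Or.inl (mem_iUnion₂.2 ⟨β', Finset.mem_filter.2 ⟨Finset.mem_univ _, ?_⟩, hs'⟩)
        exact le_of_not_gt fun hlt => (hC β β' hlt t ht s hs').not_ge hs
      · exact Or.inr hmem
    have hle : ν (Iic t) ≤ #{i | blk i ≤ β} / n := calc
      _ ≤ _ := measure_mono hsub
      _ ≤ _ := measure_union_le _ _
      _ = _ := by
        rw [hunion, measure_compl_iUnion_eq_zero hn hCm hCd hν, add_zero]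
        simp only [Finset.mem_filter, Finset.mem_univ, true_and]
    have := ENNReal.toReal_mono
      (ENNReal.div_ne_top (ENNReal.natCast_ne_top _) (Nat.cast_ne_zero.2 hn.ne')) hle
    rwa [htoReal] at this

lemma ae_mem_iff_cdf_mem_Ioc [NullSingletonClass ν] (hn : 0 < n)
    (hCm : ∀ β, MeasurableSet (C β)) (hC : ∀ β β', β < β' → ∀ s ∈ C β, ∀ t ∈ C β', s < t)
    (hν : ∀ β, ν (C β) = #{i | blk i = β} / n) :
    ∀ᵐ t ∂ν, ∀ β, t ∈ C β ↔
      cdf ν t ∈ Ioc ((#{i | blk i < β} : ℝ) / n) ((#{i | blk i ≤ β} : ℝ) / n) := by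
  have hcover : ∀ᵐ t ∂ν, ∃ β, t ∈ C β := by
    filter_upwards [mem_ae_iff.2 (measure_compl_iUnion_eq_zero hn hCm
      (pairwise_disjoint_of_forall_lt hC) hν)] with t ht using mem_iUnion.1 ht
  have hatom : ∀ᵐ t ∂ν, ∀ β : κ, cdf ν t ≠ (#{i | blk i < β} : ℝ) / n :=
    ae_all_iff.2 fun β => ae_cdf_ne _
  have hsep : ∀ β β' : κ, β < β' → (#{i | blk i ≤ β} : ℝ) / n ≤ (#{i | blk i < β'} : ℝ) / n :=
    fun β β' hlt => div_le_div_of_nonneg_right (Nat.cast_le.2 (Finset.card_le_card fun i hi =>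
      Finset.mem_filter.2 ⟨Finset.mem_univ i, (Finset.mem_filter.1 hi).2.trans_lt hlt⟩))
      n.cast_nonneg
  filter_upwards [hcover, hatom] with t ⟨β', ht'⟩ hne
  have hIoc : ∀ β, t ∈ C β →
      cdf ν t ∈ Ioc ((#{i | blk i < β} : ℝ) / n) ((#{i | blk i ≤ β} : ℝ) / n) := fun β ht =>
    have h := cdf_mem_Icc_of_mem_cell hn hCm hC hν ht
    ⟨h.1.lt_of_ne (hne β).symm, h.2⟩
  refine fun β => ⟨hIoc β, fun h => ?_⟩
  have h' := hIoc β' ht'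
  rcases lt_trichotomy β β' with hlt | rfl | hlt
  · exact absurd (h.2.trans (hsep β β' hlt)) h'.1.not_ge
  · exact ht'
  · exact absurd (h'.2.trans (hsep β' β hlt)) h.1.not_ge

end OrderedCells

section MergedCells

variable {α κ : Type*}

/-- The paper's merged cell `C(i'_1)`, for the block `β = i'_1`. -/
def mergedCell (B : α → κ) (I : α → Set ℝ) (β : κ) : Set ℝ := {t | ∃ j, B j = β ∧ t ∈ I j}

variable {B : α → κ} {I : α → Set ℝ}

lemma measurableSet_mergedCell [Countable α] (hI : ∀ j, MeasurableSet (I j)) (β : κ) :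
    MeasurableSet (mergedCell B I β) := by
  simpa only [mergedCell, ofPred_exists, ofPred_and, ofPred_mem_eq] using
    MeasurableSet.iUnion fun j => (MeasurableSet.const (B j = β)).inter (hI j)

lemma mergedCell_lt [LinearOrder α] [LinearOrder κ] (hB : Monotone B)
    (hI : ∀ j j', j < j' → ∀ s ∈ I j, ∀ t ∈ I j', s < t) {β β' : κ} (hββ' : β < β') :
    ∀ s ∈ mergedCell B I β, ∀ t ∈ mergedCell B I β', s < t := by
  rintro s ⟨j, rfl, hs⟩ t ⟨j', rfl, ht⟩
  exact hI j j' (hB.reflect_lt hββ') s hs t ht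

end MergedCells

lemma ae_eq_of_mem_owned_cell {Ω E γ κ : Type*} [MeasurableSpace Ω] [Countable γ]
    [DecidableEq γ] [DecidableEq κ] {P : Measure Ω} {X : Ω → E} {L : Ω → γ} {n : ℕ}
    {cl : Fin n → γ} {C : κ → Set E} {blk : Fin n → κ}
    (hcell : ∀ ℓ β, P (X ⁻¹' C β ∩ L ⁻¹' {ℓ}) = #{i | cl i = ℓ ∧ blk i = β} / n)
    {β : κ} {ℓ₀ : γ} (hown : ∀ i, blk i = β → cl i = ℓ₀) : ∀ᵐ ω ∂P, X ω ∈ C β → L ω = ℓ₀ := by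
  have hnull : ∀ ℓ, ∀ᵐ ω ∂P, X ω ∈ C β → L ω = ℓ → ℓ = ℓ₀ := fun ℓ => by
    by_cases hℓ : ℓ = ℓ₀
    · exact ae_of_all _ fun _ _ _ => hℓ
    have h0 : P (X ⁻¹' C β ∩ L ⁻¹' {ℓ}) = 0 := by
      rw [hcell, Finset.card_eq_zero.2 (Finset.filter_eq_empty_iff.2 fun i _ h =>
        hℓ (h.1.symm.trans (hown i h.2))), Nat.cast_zero, ENNReal.zero_div]
    filter_upwards [measure_eq_zero_iff_ae_notMem.1 h0] with ω hω hXω hLω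
    exact absurd ⟨hXω, hLω⟩ hω
  filter_upwards [ae_all_iff.2 hnull] with ω hω hXω using hω (L ω) hXω rfl

section Resampling

variable {Ω : Type*} [MeasurableSpace Ω] {P : Measure Ω} {γ : Type*} [Fintype γ]
  [MeasurableSpace γ] [MeasurableSingletonClass γ] {L : Ω → γ}

lemma sum_measure_inter_preimage_singleton (hL : Measurable L) (s : Set Ω) :
    ∑ ℓ, P (s ∩ L ⁻¹' {ℓ}) = P s := by
  have h := sum_measure_preimage_singleton (μ := P.restrict s) Finset.univ
    fun ℓ _ => hL (measurableSet_singleton ℓ)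
  simp only [Measure.restrict_apply (hL (measurableSet_singleton _)), Finset.coe_univ,
    preimage_univ, Measure.restrict_apply_univ] at h
  simpa only [inter_comm] using h

variable {X : Ω → ℝ}

lemma nullSingletonClass_map (hX : Measurable X) (hL : Measurable L)
    (h : ∀ ℓ t, P (X ⁻¹' {t} ∩ L ⁻¹' {ℓ}) = 0) : NullSingletonClass (P.map X) :=
  ⟨fun t => by
    rw [Measure.map_apply hX (measurableSet_singleton t),
      ← sum_measure_inter_preimage_singleton hL]
    simp [h]⟩

variable [DecidableEq γ] {n : ℕ} {cl : Fin n → γ} {κ : Type*} [LinearOrder κ] {C : κ → Set ℝ}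
  {blk : Fin n → κ}

lemma map_apply_cell_eq_card_div (hX : Measurable X) (hL : Measurable L)
    (hCm : ∀ β, MeasurableSet (C β))
    (hcell : ∀ ℓ β, P (X ⁻¹' C β ∩ L ⁻¹' {ℓ}) = #{i | cl i = ℓ ∧ blk i = β} / n) (β : κ) :
    P.map X (C β) = #{i | blk i = β} / n := by
  rw [Measure.map_apply hX (hCm β), ← sum_measure_inter_preimage_singleton hL]
  simp_rw [hcell, div_eq_mul_inv, ← Finset.sum_mul, ← Nat.cast_sum]
  rw [Finset.card_eq_sum_card_fiberwise (f := cl) (t := Finset.univ)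
    fun _ _ => Finset.mem_univ _]
  simp only [Finset.filter_filter, and_comm]

variable [Fintype κ] [IsProbabilityMeasure P] [NullSingletonClass (P.map X)]

lemma ae_mem_cell_iff (hX : Measurable X) (hL : Measurable L) (hn : 0 < n)
    (hCm : ∀ β, MeasurableSet (C β)) (hC : ∀ β β', β < β' → ∀ s ∈ C β, ∀ t ∈ C β', s < t)
    (hcell : ∀ ℓ β, P (X ⁻¹' C β ∩ L ⁻¹' {ℓ}) = #{i | cl i = ℓ ∧ blk i = β} / n) :
    ∀ᵐ ω ∂P, ∀ β, X ω ∈ C β ↔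
      cdf (P.map X) (X ω) ∈ Ioc ((#{i | blk i < β} : ℝ) / n) ((#{i | blk i ≤ β} : ℝ) / n) :=
  have := Measure.isProbabilityMeasure_map (μ := P) hX.aemeasurable
  ae_of_ae_map hX.aemeasurable
    (ae_mem_iff_cdf_mem_Ioc hn hCm hC (map_apply_cell_eq_card_div hX hL hCm hcell))

lemma measure_cdf_mem_Ioc_inter_eq_card_div (hX : Measurable X) (hL : Measurable L) (hn : 0 < n)
    (hCm : ∀ β, MeasurableSet (C β)) (hC : ∀ β β', β < β' → ∀ s ∈ C β, ∀ t ∈ C β', s < t)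
    (hcell : ∀ ℓ β, P (X ⁻¹' C β ∩ L ⁻¹' {ℓ}) = #{i | cl i = ℓ ∧ blk i = β} / n) (ℓ : γ) (β : κ) :
    P ({ω | cdf (P.map X) (X ω) ∈ Ioc ((#{i | blk i < β} : ℝ) / n) ((#{i | blk i ≤ β} : ℝ) / n)}
      ∩ L ⁻¹' {ℓ}) = #{i | cl i = ℓ ∧ blk i = β} / n := by
  rw [← hcell]
  refine measure_congr ((eventuallyEq_set.2 ?_).inter (ae_eq_refl _))
  filter_upwards [ae_mem_cell_iff hX hL hn hCm hC hcell] with ω h using (h β).symm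

lemma measure_cdf_mem_Ioc_inter_of_owned (hX : Measurable X) (hL : Measurable L) (hn : 0 < n)
    (hCm : ∀ β, MeasurableSet (C β)) (hC : ∀ β β', β < β' → ∀ s ∈ C β, ∀ t ∈ C β', s < t)
    (hcell : ∀ ℓ β, P (X ⁻¹' C β ∩ L ⁻¹' {ℓ}) = #{i | cl i = ℓ ∧ blk i = β} / n)
    {β : κ} {ℓ₀ : γ} (hown : ∀ i, blk i = β → cl i = ℓ₀) {a b : ℝ} (ha₀ : 0 ≤ a) (hb₁ : b ≤ 1)
    (ha : (#{i | blk i < β} : ℝ) / n ≤ a) (hb : b ≤ (#{i | blk i ≤ β} : ℝ) / n) (ℓ : γ) :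
    P ({ω | cdf (P.map X) (X ω) ∈ Ioc a b} ∩ L ⁻¹' {ℓ}) =
      if ℓ = ℓ₀ then ENNReal.ofReal (b - a) else 0 := by
  have := Measure.isProbabilityMeasure_map (μ := P) hX.aemeasurable
  have howner : ∀ᵐ ω ∂P, cdf (P.map X) (X ω) ∈ Ioc a b → L ω = ℓ₀ := by
    filter_upwards [ae_eq_of_mem_owned_cell hcell hown, ae_mem_cell_iff hX hL hn hCm hC hcell]
      with ω hω hcell_iff hab
    exact hω ((hcell_iff β).2 ⟨ha.trans_lt hab.1, hab.2.trans hb⟩)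
  split_ifs with hℓ
  · subst hℓ
    have hcongr : ({ω | cdf (P.map X) (X ω) ∈ Ioc a b} ∩ L ⁻¹' {ℓ} : Set Ω) =ᵐ[P]
        {ω | cdf (P.map X) (X ω) ∈ Ioc a b} := by
      filter_upwards [howner] with ω h using propext (and_iff_left_of_imp h)
    rw [measure_congr hcongr, ← measure_cdf_mem_Ioc (μ := P.map X) ha₀ hb₁]
    exact (Measure.map_apply hX ((monotone_cdf _).measurable measurableSet_Ioc)).symm
  · refine measure_eq_zero_iff_ae_notMem.2 ?_
    filter_upwards [howner] with ω h hω using hℓ ((hω.2 : L ω = ℓ).symm.trans (h hω.1))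

lemma measure_cdf_mem_Ioc_inter_eq_card_div_of_block {α : Type*} [LinearOrder α] {B : α → κ}
    (hB : Monotone B) {idx : Fin n → α} (hX : Measurable X) (hL : Measurable L) (hn : 0 < n)
    (hCm : ∀ β, MeasurableSet (C β)) (hC : ∀ β β', β < β' → ∀ s ∈ C β, ∀ t ∈ C β', s < t)
    (hcell : ∀ ℓ β, P (X ⁻¹' C β ∩ L ⁻¹' {ℓ}) = #{i | cl i = ℓ ∧ B (idx i) = β} / n) {j : α}
    (hj : (∀ j', B j' = B j → j' = j) ∨ ∃ ℓ₀, ∀ i, B (idx i) = B j → cl i = ℓ₀) (ℓ : γ) :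
    P ({ω | cdf (P.map X) (X ω) ∈ Ioc ((#{i | idx i < j} : ℝ) / n) ((#{i | idx i ≤ j} : ℝ) / n)}
      ∩ L ⁻¹' {ℓ}) = #{i | cl i = ℓ ∧ idx i = j} / n := by
  rcases hj with hsingle | ⟨ℓ₀, hown⟩
  · have hlo : #{i | idx i < j} = #{i | B (idx i) < B j} := congrArg Finset.card
      (Finset.filter_congr fun i _ => (hB.apply_lt_iff_of_fiber_singleton hsingle _).symm)
    have hhi : #{i | idx i ≤ j} = #{i | B (idx i) ≤ B j} := congrArg Finset.card
      (Finset.filter_congr fun i _ => (hB.apply_le_iff_of_fiber_singleton hsingle _).symm)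
    have hcount : #{i | cl i = ℓ ∧ idx i = j} = #{i | cl i = ℓ ∧ B (idx i) = B j} :=
      congrArg Finset.card (Finset.filter_congr fun i _ =>
        and_congr_right fun _ => ⟨congrArg B, hsingle _⟩)
    rw [hlo, hhi, hcount]
    exact measure_cdf_mem_Ioc_inter_eq_card_div hX hL hn hCm hC hcell ℓ (B j)
  have hlo : (#{i | B (idx i) < B j} : ℝ) / n ≤ (#{i | idx i < j} : ℝ) / n :=
    div_le_div_of_nonneg_right (Nat.cast_le.2 (Finset.card_le_card
      (Finset.monotone_filter_right _ fun _ _ => hB.reflect_lt))) n.cast_nonneg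
  have hhi : (#{i | idx i ≤ j} : ℝ) / n ≤ (#{i | B (idx i) ≤ B j} : ℝ) / n :=
    div_le_div_of_nonneg_right (Nat.cast_le.2 (Finset.card_le_card
      (Finset.monotone_filter_right _ fun _ _ h => hB h))) n.cast_nonneg
  have hhi₁ : (#{i | idx i ≤ j} : ℝ) / n ≤ 1 := div_le_one_of_le₀
    (by exact_mod_cast (Finset.card_le_univ _).trans_eq (Fintype.card_fin n)) n.cast_nonneg
  rw [measure_cdf_mem_Ioc_inter_of_owned hX hL hn hCm hC hcell hown (by positivity) hhi₁
    hlo hhi ℓ]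
  split_ifs with hℓ
  · subst hℓ
    have hsplit : #{i | idx i ≤ j} = #{i | idx i < j} + #{i | cl i = ℓ ∧ idx i = j} := by
      rw [← Finset.card_union_of_disjoint (Finset.disjoint_filter.2 fun i _ h h' => h.ne h'.2),
        ← Finset.filter_or]
      exact congrArg Finset.card (Finset.filter_congr fun i _ =>
        ⟨fun h => h.lt_or_eq.imp_right fun h' => ⟨hown i (congrArg B h'), h'⟩,
          fun h => h.elim le_of_lt fun h' => h'.2.le⟩)
    rw [hsplit, Nat.cast_add, ← sub_div, add_sub_cancel_left,
      ENNReal.ofReal_div_of_pos (by positivity), ENNReal.ofReal_natCast, ENNReal.ofReal_natCast]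
  · rw [Finset.card_eq_zero.2 (Finset.filter_eq_empty_iff.2 fun i _ h =>
      hℓ (h.1.symm.trans (hown i (congrArg B h.2)))), Nat.cast_zero, ENNReal.zero_div]

lemma ae_empiricalQuantile_cdf_eq_iff (hX : Measurable X) (hn : 0 < n) (x : Fin n → ℝ) (a : ℝ) :
    ∀ᵐ ω ∂P, empiricalQuantile x (cdf (P.map X) (X ω)) = a ↔
      cdf (P.map X) (X ω) ∈ Ioc ((#{i | x i < a} : ℝ) / n) ((#{i | x i ≤ a} : ℝ) / n) := by
  have := Measure.isProbabilityMeasure_map (μ := P) hX.aemeasurable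
  filter_upwards [ae_of_ae_map hX.aemeasurable ae_cdf_mem_Ioc] with ω hω
  exact empiricalQuantile_eq_iff hn hω

end Resampling

theorem one_dim_merged_cells_resampling_general
    (n n1 c : ℕ) (hn : 0 < n)
    (x : Fin n → ℝ) (cl : Fin n → Fin c)
    (v : Fin n1 → ℝ) (hv : StrictMono v)
    (hx : ∀ i, ∃ i1, x i = v i1)
    (I : Fin n1 → Set ℝ)
    (hImeas : ∀ i1, MeasurableSet (I i1))
    (hIord : ∀ i1 i1' : Fin n1, i1 < i1' → ∀ s ∈ I i1, ∀ t ∈ I i1', s < t)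
    -- merged cells: a monotone surjective block assignment on contiguous cells
    (b : ℕ) (B : Fin n1 → Fin b)
    (hBmono : Monotone B)
    -- each block containing at least two cells is wholly owned by a single cluster
    (hBown : ∀ i1 i1' : Fin n1, i1 ≠ i1' → B i1 = B i1' →
      ∃ ℓ : Fin c, ∀ i1'' : Fin n1, B i1'' = B i1 →
        ∀ i : Fin n, x i = v i1'' → cl i = ℓ)
    {Ω : Type*} [MeasurableSpace Ω] (P : Measure Ω) [IsProbabilityMeasure P]
    (L : Ω → Fin c) (hLmeas : Measurable L)
    (Xt : Ω → ℝ) (hXtmeas : Measurable Xt)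
    -- merged-cell probabilities:  P(X̃ ∈ C(i'_1), L = ℓ) = (n_ℓ(i'_1)/n_ℓ)·(n_ℓ/n)
    (hcellm : ∀ (ℓ : Fin c) (β : Fin b),
      P ({ω | ∃ i1, B i1 = β ∧ Xt ω ∈ I i1} ∩ {ω | L ω = ℓ})
        = ((Nat.card {i : Fin n // cl i = ℓ ∧ ∃ i1, B i1 = β ∧ x i = v i1} : ℝ≥0∞)
              / (Nat.card {i : Fin n // cl i = ℓ} : ℝ≥0∞))
          * ((Nat.card {i : Fin n // cl i = ℓ} : ℝ≥0∞) / n))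
    -- the conditional distribution of X̃ given L = ℓ is continuous (atomless)
    (hatomless : ∀ (ℓ : Fin c) (t : ℝ), P ({ω | Xt ω = t} ∩ {ω | L ω = ℓ}) = 0)
    -- F is the CDF of X̃ and G the generalized inverse of the empirical CDF
    (F : ℝ → ℝ) (hF : ∀ t, F t = (P {ω | Xt ω ≤ t}).toReal)
    (G : ℝ → ℝ)
    (hG : ∀ u, G u = sInf {s : ℝ | u ≤ (Nat.card {i : Fin n // x i ≤ s} : ℝ) / n}) :
    ∀ (ℓ : Fin c) (i1 : Fin n1),
      P ({ω | G (F (Xt ω)) = v i1} ∩ {ω | L ω = ℓ})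
        = ((Nat.card {i : Fin n // cl i = ℓ ∧ x i = v i1} : ℝ≥0∞)
              / (Nat.card {i : Fin n // cl i = ℓ} : ℝ≥0∞))
          * ((Nat.card {i : Fin n // cl i = ℓ} : ℝ≥0∞) / n) := by
  intro ℓ j
  choose idx hidx using hx
  obtain rfl : x = fun i => v (idx i) := funext hidx
  simp only [Nat.card_eq_fintype_card, Fintype.card_subtype, hv.injective.eq_iff,
    exists_eq_right'] at hcellm hG ⊢
  rw [ENNReal.natCast_div_mul_div_cancel
    (Finset.card_le_card (Finset.monotone_filter_right _ fun _ _ => And.left))]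
  have hcell : ∀ ℓ β, P (Xt ⁻¹' mergedCell B I β ∩ L ⁻¹' {ℓ}) =
      #{i | cl i = ℓ ∧ B (idx i) = β} / n := fun ℓ β =>
    (hcellm ℓ β).trans (ENNReal.natCast_div_mul_div_cancel
      (Finset.card_le_card (Finset.monotone_filter_right _ fun _ _ => And.left)) _)
  have := nullSingletonClass_map hXtmeas hLmeas hatomless
  have := Measure.isProbabilityMeasure_map (μ := P) hXtmeas.aemeasurable
  have hFcdf : F = cdf (P.map Xt) := funext fun t => by
    rw [hF, cdf_eq_real, measureReal_def, Measure.map_apply hXtmeas measurableSet_Iic]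
    rfl
  have hevent : ({ω | G (F (Xt ω)) = v j} : Set Ω) =ᵐ[P] {ω | cdf (P.map Xt) (Xt ω) ∈
      Ioc ((#{i | idx i < j} : ℝ) / n) ((#{i | idx i ≤ j} : ℝ) / n)} := by
    rw [hFcdf, show G = empiricalQuantile (fun i => v (idx i)) from funext hG]
    have h := ae_empiricalQuantile_cdf_eq_iff (P := P) hXtmeas hn (fun i => v (idx i)) (v j)
    simp only [hv.lt_iff_lt, hv.le_iff_le] at h
    exact eventuallyEq_set.2 h
  rw [measure_congr (hevent.inter (ae_eq_refl {ω | L ω = ℓ}))]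
  refine measure_cdf_mem_Ioc_inter_eq_card_div_of_block hBmono hXtmeas hLmeas hn
    (measurableSet_mergedCell hImeas) (fun _ _ => mergedCell_lt hBmono hIord) hcell
    (or_iff_not_imp_left.2 fun hsingle => ?_) ℓ
  push Not at hsingle
  obtain ⟨j', hj', hne⟩ := hsingle
  obtain ⟨ℓ₀, hown⟩ := hBown j' j hne hj'
  exact ⟨ℓ₀, fun i hi => hown (idx i) (hi.trans hj'.symm) i rfl⟩

/-- One-dimensional corollary: merge each maximal block of contiguous
cells all of whose data points belong entirely to one common cluster.  If the dither `X̃`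
is generated by drawing a cluster `L` with `P(L = ℓ) = n_ℓ/n` and, given `L = ℓ`, drawing
`X̃` from any atomless conditional distribution satisfying
`P(X̃ ∈ C(i'_1) | L = ℓ) = n_ℓ(i'_1)/n_ℓ` on merged cells, then `X̂ = G(F_{X̃}(X̃))`,
with `F_{X̃}` the CDF of `X̃` and `G` the generalized inverse of the empirical CDF,
satisfies `P(X̂ = v_1(i_1) ∧ L = ℓ) = (n_ℓ(i_1)/n_ℓ)·(n_ℓ/n)`, i.e. conditioned on `L = ℓ`
it resamples the cluster's values with their within-cluster empirical frequencies. -/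
theorem one_dim_merged_cells_resampling
    (n n1 c : ℕ) (hn : 0 < n)
    (x : Fin n → ℝ) (cl : Fin n → Fin c)
    (v : Fin n1 → ℝ) (hv : StrictMono v)
    (hx : ∀ i, ∃ i1, x i = v i1)
    (hobs : ∀ i1, ∃ i, x i = v i1)
    (hcl : ∀ ℓ : Fin c, ∃ i, cl i = ℓ)
    (I : Fin n1 → Set ℝ)
    (hImeas : ∀ i1, MeasurableSet (I i1))
    (hIint : ∀ i1, ∃ a b : ℝ, a < b ∧ Set.Ioo a b ⊆ I i1 ∧ I i1 ⊆ Set.Icc a b)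
    (hIord : ∀ i1 i1' : Fin n1, i1 < i1' → ∀ s ∈ I i1, ∀ t ∈ I i1', s < t)
    (hvI : ∀ i1, v i1 ∈ I i1)
    -- merged cells: a monotone surjective block assignment on contiguous cells
    (b : ℕ) (B : Fin n1 → Fin b)
    (hBmono : Monotone B) (hBsurj : Function.Surjective B)
    -- each block containing at least two cells is wholly owned by a single cluster
    (hBown : ∀ i1 i1' : Fin n1, i1 ≠ i1' → B i1 = B i1' →
      ∃ ℓ : Fin c, ∀ i1'' : Fin n1, B i1'' = B i1 →
        ∀ i : Fin n, x i = v i1'' → cl i = ℓ)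
    -- maximality: two adjacent cells in different blocks cannot both belong in full to a
    -- common cluster
    (hBmax : ∀ (i1 : Fin n1) (h : (i1 : ℕ) + 1 < n1), B i1 ≠ B ⟨(i1 : ℕ) + 1, h⟩ →
      ¬ ∃ ℓ : Fin c, (∀ i : Fin n, x i = v i1 → cl i = ℓ)
          ∧ (∀ i : Fin n, x i = v ⟨(i1 : ℕ) + 1, h⟩ → cl i = ℓ))
    {Ω : Type*} [MeasurableSpace Ω] (P : Measure Ω) [IsProbabilityMeasure P]
    (L : Ω → Fin c) (hLmeas : Measurable L)
    (Xt : Ω → ℝ) (hXtmeas : Measurable Xt)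
    -- cluster marginal:  P(L = ℓ) = n_ℓ / n
    (hL : ∀ ℓ, P {ω | L ω = ℓ} = (Nat.card {i : Fin n // cl i = ℓ} : ℝ≥0∞) / n)
    -- merged-cell probabilities:  P(X̃ ∈ C(i'_1), L = ℓ) = (n_ℓ(i'_1)/n_ℓ)·(n_ℓ/n)
    (hcellm : ∀ (ℓ : Fin c) (β : Fin b),
      P ({ω | ∃ i1, B i1 = β ∧ Xt ω ∈ I i1} ∩ {ω | L ω = ℓ})
        = ((Nat.card {i : Fin n // cl i = ℓ ∧ ∃ i1, B i1 = β ∧ x i = v i1} : ℝ≥0∞)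
              / (Nat.card {i : Fin n // cl i = ℓ} : ℝ≥0∞))
          * ((Nat.card {i : Fin n // cl i = ℓ} : ℝ≥0∞) / n))
    -- the conditional distribution of X̃ given L = ℓ is continuous (atomless)
    (hatomless : ∀ (ℓ : Fin c) (t : ℝ), P ({ω | Xt ω = t} ∩ {ω | L ω = ℓ}) = 0)
    -- F is the CDF of X̃ and G the generalized inverse of the empirical CDF
    (F : ℝ → ℝ) (hF : ∀ t, F t = (P {ω | Xt ω ≤ t}).toReal)
    (G : ℝ → ℝ)
    (hG : ∀ u, G u = sInf {s : ℝ | u ≤ (Nat.card {i : Fin n // x i ≤ s} : ℝ) / n}) :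
    ∀ (ℓ : Fin c) (i1 : Fin n1),
      P ({ω | G (F (Xt ω)) = v i1} ∩ {ω | L ω = ℓ})
        = ((Nat.card {i : Fin n // cl i = ℓ ∧ x i = v i1} : ℝ≥0∞)
              / (Nat.card {i : Fin n // cl i = ℓ} : ℝ≥0∞))
          * ((Nat.card {i : Fin n // cl i = ℓ} : ℝ≥0∞) / n) :=
  one_dim_merged_cells_resampling_general n n1 c hn x cl v hv hx I hImeas hIord b B hBmono hBown P L
    hLmeas Xt hXtmeas hcellm hatomless F hF G hG
end

section
/- Let Z be a real random variable with continuous CDF F whose law is supported on the union of pairwise disjoint intervals I(1),…,I(m), ordered left to right, with P(Z ∈ I(i)) = p(i) and Σ p(i) = 1. Let v(1) < … < v(m) be reals with v(i) ∈ I(i), and let G be the generalized inverse of the CDF of the discrete measure Σ_i p(i) δ_{v(i)}. Then almost surely G(F(Z)) = v(i) on the event {Z ∈ I(i)}; in particular, the law of G(F(Z)) equals Σ_i p(i) δ_{v(i)}. -/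
open MeasureTheory Set Function

/-!
Almost surely on `{Z ∈ I i}` one has `∑ j < i, p j < F Z ≤ ∑ j ≤ i, p j`, and on that interval
the generalized inverse `G` equals `v i`. The pieces `I j` need not be measurable, but being
ordered they are separated by measurable upper sets, so the outer measure of `Z ⁻¹' ⋃ I j` is
additive. This gives the upper bound; the points of `I i` violating the strict lower bound see no
mass below themselves, so they form a null set. The events `{F Z ∈ (∑ j < i, p j, ∑ j ≤ i, p j]}`
are disjoint and have mass at least `p i`; as the `p i` sum to one, their masses are exactly `p i`,
which identifies the law of `G (F Z)`.
-/

section Separated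

variable {Ω α : Type*} [MeasurableSpace Ω] {μ : Measure Ω}
  [TopologicalSpace α] [MeasurableSpace α] [OpensMeasurableSpace α]
  [LinearOrder α] [OrderClosedTopology α] {Z : Ω → α}

theorem measure_preimage_union_of_forall_lt (hZ : Measurable Z) {s t : Set α}
    (hst : ∀ x ∈ s, ∀ y ∈ t, x < y) :
    μ (Z ⁻¹' (s ∪ t)) = μ (Z ⁻¹' s) + μ (Z ⁻¹' t) := by
  set U : Set α := (upperClosure t : Set α)
  have hU : MeasurableSet U := (upperClosure t).upper.ordConnected.measurableSet
  have hsU : ∀ x ∈ s, x ∉ U := fun x hx ⟨y, hy, hyx⟩ => (hst x hx y hy).not_ge hyx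
  rw [← measure_inter_add_sdiff (Z ⁻¹' (s ∪ t)) (hZ hU), add_comm]
  congr 2
  · ext ω
    simp only [mem_sdiff, mem_preimage, mem_union]
    exact ⟨fun ⟨h, hnU⟩ => h.resolve_right fun ht => hnU (subset_upperClosure ht),
      fun h => ⟨Or.inl h, hsU _ h⟩⟩
  · ext ω
    simp only [mem_inter_iff, mem_preimage, mem_union]
    exact ⟨fun ⟨h, hU⟩ => h.resolve_left fun hs => hsU _ hs hU,
      fun h => ⟨Or.inr h, subset_upperClosure h⟩⟩

theorem measure_preimage_biUnion_of_forall_lt {ι : Type*} [LinearOrder ι] (hZ : Measurable Z)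
    {I : ι → Set α} (hI : ∀ i j, i < j → ∀ x ∈ I i, ∀ y ∈ I j, x < y) (S : Finset ι) :
    μ (Z ⁻¹' ⋃ i ∈ S, I i) = ∑ i ∈ S, μ (Z ⁻¹' I i) := by
  induction S using Finset.induction_on_max with
  | empty => simp
  | insert a S hlt ih =>
    have hsep : ∀ x ∈ ⋃ i ∈ S, I i, ∀ y ∈ I a, x < y := by
      intro x hx y hy
      obtain ⟨i, hi, hx⟩ := mem_iUnion₂.1 hx
      exact hI i a (hlt i hi) x hx y hy
    rw [Finset.set_biUnion_insert, union_comm, measure_preimage_union_of_forall_lt hZ hsep, ih,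
      Finset.sum_insert fun ha => (hlt a ha).false, add_comm]

end Separated

theorem measure_preimage_eq_zero_of_forall_inter_Iic {Ω : Type*} [MeasurableSpace Ω]
    {μ : Measure Ω} {Z : Ω → ℝ} {s : Set ℝ} (h : ∀ x ∈ s, μ (Z ⁻¹' (s ∩ Iic x)) = 0) :
    μ (Z ⁻¹' s) = 0 := by
  by_cases hmax : ∃ x ∈ s, ∀ y ∈ s, y ≤ x
  · obtain ⟨x, hx, hle⟩ := hmax
    exact measure_mono_null (preimage_mono fun y hy => mem_inter hy (hle y hy)) (h x hx)
  push Not at hmax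
  have hcover : s ⊆ ⋃ (q : ℚ) (_ : ∃ y ∈ s, (q : ℝ) ≤ y), s ∩ Iic (q : ℝ) := by
    intro x hx
    obtain ⟨y, hy, hxy⟩ := hmax x hx
    obtain ⟨q, hxq, hqy⟩ := exists_rat_btwn hxy
    simp only [mem_iUnion]
    exact ⟨q, ⟨y, hy, hqy.le⟩, hx, hxq.le⟩
  refine measure_mono_null (preimage_mono hcover) ?_
  rw [preimage_iUnion₂]
  exact measure_iUnion_null fun q => measure_iUnion_null fun ⟨y, hy, hqy⟩ =>
    measure_mono_null (preimage_mono (inter_subset_inter_right _ (Iic_subset_Iic.2 hqy)))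
      (h y hy)

section OrderedPieces

variable {Ω ι : Type*} [MeasurableSpace Ω] {μ : Measure Ω} [IsFiniteMeasure μ] {Z : Ω → ℝ}
  [LinearOrder ι] [LocallyFiniteOrderBot ι] {I : ι → Set ℝ}

theorem measure_preimage_Iic_le_sum_Iic [Fintype ι] (hZ : Measurable Z)
    (hI : ∀ i j, i < j → ∀ x ∈ I i, ∀ y ∈ I j, x < y)
    (htot : ∑ j, μ (Z ⁻¹' I j) = μ univ) {i : ι} {x : ℝ} (hx : x ∈ I i) :
    μ (Z ⁻¹' Iic x) ≤ ∑ j ∈ Finset.Iic i, μ (Z ⁻¹' I j) := by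
  have hsep : ∀ y ∈ Iic x, ∀ z ∈ ⋃ j ∈ (Finset.Iic i)ᶜ, I j, y < z := by
    intro y hy z hz
    obtain ⟨j, hj, hz⟩ := mem_iUnion₂.1 hz
    have hij : i < j := by simpa using hj
    exact (mem_Iic.1 hy).trans_lt (hI i j hij x hx z hz)
  refine ENNReal.le_of_add_le_add_right (a := ∑ j ∈ (Finset.Iic i)ᶜ, μ (Z ⁻¹' I j))
    (ENNReal.sum_ne_top.2 fun j _ => measure_ne_top μ _) ?_
  calc μ (Z ⁻¹' Iic x) + ∑ j ∈ (Finset.Iic i)ᶜ, μ (Z ⁻¹' I j)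
      = μ (Z ⁻¹' (Iic x ∪ ⋃ j ∈ (Finset.Iic i)ᶜ, I j)) := by
        rw [measure_preimage_union_of_forall_lt hZ hsep,
          measure_preimage_biUnion_of_forall_lt hZ hI]
    _ ≤ μ univ := measure_mono (subset_univ _)
    _ = ∑ j ∈ Finset.Iic i, μ (Z ⁻¹' I j) + ∑ j ∈ (Finset.Iic i)ᶜ, μ (Z ⁻¹' I j) := by
        rw [← htot, Finset.sum_add_sum_compl]

theorem ae_sum_Iio_lt_measure_preimage_Iic (hZ : Measurable Z)
    (hI : ∀ i j, i < j → ∀ x ∈ I i, ∀ y ∈ I j, x < y) (i : ι) :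
    ∀ᵐ ω ∂μ, Z ω ∈ I i → ∑ j ∈ Finset.Iio i, μ (Z ⁻¹' I j) < μ (Z ⁻¹' Iic (Z ω)) := by
  set c := ∑ j ∈ Finset.Iio i, μ (Z ⁻¹' I j)
  set s := I i ∩ {x | μ (Z ⁻¹' Iic x) ≤ c}
  have hbelow : ∀ y ∈ ⋃ j ∈ Finset.Iio i, I j, ∀ z ∈ I i, y < z := by
    intro y hy z hz
    obtain ⟨j, hj, hy⟩ := mem_iUnion₂.1 hy
    exact hI j i (Finset.mem_Iio.1 hj) y hy z hz
  have hs : μ (Z ⁻¹' s) = 0 := by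
    refine measure_preimage_eq_zero_of_forall_inter_Iic fun x hx => ?_
    have hle : c + μ (Z ⁻¹' (s ∩ Iic x)) ≤ c + 0 :=
      calc c + μ (Z ⁻¹' (s ∩ Iic x))
          = μ (Z ⁻¹' ((⋃ j ∈ Finset.Iio i, I j) ∪ s ∩ Iic x)) := by
            rw [measure_preimage_union_of_forall_lt hZ fun y hy z hz => hbelow y hy z hz.1.1,
              measure_preimage_biUnion_of_forall_lt hZ hI]
        _ ≤ μ (Z ⁻¹' Iic x) := measure_mono (preimage_mono (union_subset
            (fun y hy => (hbelow y hy x hx.1).le) inter_subset_right))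
        _ ≤ c + 0 := by rw [add_zero]; exact hx.2
    exact nonpos_iff_eq_zero.1 (ENNReal.le_of_add_le_add_left
      (ENNReal.sum_ne_top.2 fun j _ => measure_ne_top μ (Z ⁻¹' I j)) hle)
  filter_upwards [measure_eq_zero_iff_ae_notMem.1 hs] with ω hω hZω
  exact lt_of_not_ge fun h => hω ⟨hZω, h⟩

end OrderedPieces

section DiscreteCDF

variable {ι : Type*} [LinearOrder ι] [LocallyFiniteOrderBot ι] {p : ι → ℝ}

theorem pairwise_disjoint_Ioc_sum_Iio_sum_Iic (hp : ∀ i, 0 ≤ p i) :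
    Pairwise (Disjoint on fun i => Ioc (∑ j ∈ Finset.Iio i, p j) (∑ j ∈ Finset.Iic i, p j)) := by
  have key : ∀ i k, i < k → ∑ j ∈ Finset.Iic i, p j ≤ ∑ j ∈ Finset.Iio k, p j := fun i k hik =>
    Finset.sum_le_sum_of_subset_of_nonneg
      (fun j hj => Finset.mem_Iio.2 ((Finset.mem_Iic.1 hj).trans_lt hik)) fun j _ _ => hp j
  intro i k hik
  rcases hik.lt_or_gt with h | h
  · exact Ioc_disjoint_Ioc_of_le (key i k h)
  · exact (Ioc_disjoint_Ioc_of_le (key k i h)).symm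

variable [Fintype ι]

/-- The CDF of `∑ j, p j • δ (v j)`. -/
noncomputable def discreteCDF (v p : ι → ℝ) (x : ℝ) : ℝ :=
  ∑ j ∈ Finset.univ.filter (fun j => v j ≤ x), p j

theorem discreteCDF_apply_self {v : ι → ℝ} (hv : StrictMono v) (i : ι) :
    discreteCDF v p (v i) = ∑ j ∈ Finset.Iic i, p j := by
  refine Finset.sum_congr ?_ fun _ _ => rfl
  ext j
  simp [hv.le_iff_le]

theorem discreteCDF_le_sum_Iio {v : ι → ℝ} (hv : StrictMono v) (hp : ∀ i, 0 ≤ p i) {i : ι}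
    {x : ℝ} (hx : x < v i) : discreteCDF v p x ≤ ∑ j ∈ Finset.Iio i, p j := by
  refine Finset.sum_le_sum_of_subset_of_nonneg (fun j hj => ?_) fun j _ _ => hp j
  rw [Finset.mem_filter] at hj
  exact Finset.mem_Iio.2 (hv.lt_iff_lt.1 (hj.2.trans_lt hx))

theorem sInf_setOf_le_discreteCDF {v : ι → ℝ} (hv : StrictMono v) (hp : ∀ i, 0 ≤ p i) {i : ι}
    {u : ℝ} (hu : u ∈ Ioc (∑ j ∈ Finset.Iio i, p j) (∑ j ∈ Finset.Iic i, p j)) :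
    sInf {x | u ≤ discreteCDF v p x} = v i := by
  refine IsLeast.csInf_eq ⟨?_, fun x hx => ?_⟩
  · show u ≤ discreteCDF v p (v i)
    rw [discreteCDF_apply_self hv]
    exact hu.2
  · by_contra! hlt
    exact (hu.1.trans_le hx).not_ge (discreteCDF_le_sum_Iio hv hp hlt)

end DiscreteCDF

section Partition

variable {Ω ι : Type*} [MeasurableSpace Ω] {μ : Measure Ω} [Fintype ι] {E : ι → Set Ω}

theorem measure_eq_of_ae_subset_of_sum_eq [IsFiniteMeasure μ] (hE : ∀ i, MeasurableSet (E i))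
    (hd : Pairwise (Disjoint on E)) {A : ι → Set Ω} (hA : ∀ i, A i ≤ᵐ[μ] E i)
    (hA_sum : ∑ i, μ (A i) = μ univ) (i : ι) : μ (E i) = μ (A i) := by
  have hAE : ∀ i, μ.real (A i) ≤ μ.real (E i) := fun i =>
    ENNReal.toReal_mono (measure_ne_top μ _) (measure_mono_ae (hA i))
  have hE_sum : ∑ i, μ.real (E i) ≤ μ.real univ :=
    sum_measureReal_le_measureReal_univ (fun i _ => hE i) fun i _ j _ hij => hd hij
  have hA_sum' : ∑ i, μ.real (A i) = μ.real univ := by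
    simp only [measureReal_def]
    rw [← ENNReal.toReal_sum fun i _ => measure_ne_top μ _, hA_sum]
  have heq := (Finset.sum_eq_sum_iff_of_le fun i _ => hAE i).1
    (le_antisymm (Finset.sum_le_sum fun i _ => hAE i) (hE_sum.trans hA_sum'.ge)) i
    (Finset.mem_univ i)
  rw [← ofReal_measureReal, ← heq, ofReal_measureReal]

theorem map_eq_sum_smul_dirac {β : Type*} [MeasurableSpace β] (hE : ∀ i, MeasurableSet (E i))
    (hd : Pairwise (Disjoint on E)) (hcover : ∀ᵐ ω ∂μ, ω ∈ ⋃ i, E i) {f : Ω → β} {b : ι → β}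
    (hf : ∀ i, ∀ ω ∈ E i, f ω = b i) :
    μ.map f = ∑ i, μ (E i) • Measure.dirac (b i) := by
  have hμ : μ = Measure.sum fun i => μ.restrict (E i) := by
    rw [← Measure.restrict_iUnion hd hE, Measure.restrict_eq_self_of_ae_mem hcover]
  have hconst : ∀ i, f =ᵐ[μ.restrict (E i)] fun _ => b i := fun i =>
    ae_restrict_of_forall_mem (hE i) (hf i)
  have hmeas : AEMeasurable f (Measure.sum fun i => μ.restrict (E i)) :=
    AEMeasurable.sum_measure fun i => aemeasurable_const.congr (hconst i).symm
  calc μ.map f = (Measure.sum fun i => μ.restrict (E i)).map f := by rw [← hμ]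
    _ = ∑ i, μ (E i) • Measure.dirac (b i) := by
      rw [Measure.map_sum hmeas, Measure.sum_fintype]
      refine Finset.sum_congr rfl fun i _ => ?_
      rw [Measure.map_congr (hconst i), Measure.map_const, Measure.restrict_apply_univ]

theorem map_eq_sum_smul_dirac_of_ae_subset [IsFiniteMeasure μ] {β : Type*} [MeasurableSpace β]
    (hE : ∀ i, MeasurableSet (E i)) (hd : Pairwise (Disjoint on E)) {A : ι → Set Ω}
    (hA : ∀ i, A i ≤ᵐ[μ] E i) (hA_sum : ∑ i, μ (A i) = μ univ) {f : Ω → β} {b : ι → β}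
    (hf : ∀ i, ∀ ω ∈ E i, f ω = b i) :
    μ.map f = ∑ i, μ (A i) • Measure.dirac (b i) := by
  have hμE := measure_eq_of_ae_subset_of_sum_eq hE hd hA hA_sum
  have hcover : ∀ᵐ ω ∂μ, ω ∈ ⋃ i, E i := by
    rw [ae_mem_iff_measure_eq (MeasurableSet.iUnion hE).nullMeasurableSet,
      measure_iUnion hd hE, tsum_fintype, ← hA_sum]
    exact Finset.sum_congr rfl fun i _ => hμE i
  simp_rw [map_eq_sum_smul_dirac hE hd hcover hf, hμE]

end Partition

theorem genInv_comp_cdf_eq_values_general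
    {Ω : Type*} [MeasurableSpace Ω] (μ : Measure Ω) [IsProbabilityMeasure μ]
    (Z : Ω → ℝ) (hZ : Measurable Z) (m : ℕ)
    (I : Fin m → Set ℝ)
    (hIord : ∀ i j : Fin m, i < j → ∀ x ∈ I i, ∀ y ∈ I j, x < y)
    (p : Fin m → ℝ) (hp : ∀ i, 0 ≤ p i) (hsum : ∑ i, p i = 1)
    (hpI : ∀ i, μ {ω | Z ω ∈ I i} = ENNReal.ofReal (p i))
    (v : Fin m → ℝ) (hv : StrictMono v)
    (F : ℝ → ℝ) (hF : ∀ x, F x = (μ {ω | Z ω ≤ x}).toReal)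
    (G : ℝ → ℝ)
    (hG : ∀ u, G u = sInf {x : ℝ |
      u ≤ ∑ i ∈ Finset.univ.filter (fun i => v i ≤ x), p i}) :
    (∀ᵐ ω ∂μ, ∀ i, Z ω ∈ I i → G (F (Z ω)) = v i) ∧
      Measure.map (fun ω => G (F (Z ω))) μ
        = ∑ i, ENNReal.ofReal (p i) • Measure.dirac (v i) := by
  set J : Fin m → Set ℝ := fun i => Ioc (∑ j ∈ Finset.Iio i, p j) (∑ j ∈ Finset.Iic i, p j)
  have hμF : ∀ x, μ (Z ⁻¹' Iic x) = ENNReal.ofReal (F x) := fun x => by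
    rw [hF, ENNReal.ofReal_toReal (measure_ne_top μ _)]; rfl
  have hmass : ∀ S : Finset (Fin m), ∑ j ∈ S, μ (Z ⁻¹' I j) = ENNReal.ofReal (∑ j ∈ S, p j) :=
    fun S => by
      rw [ENNReal.ofReal_sum_of_nonneg fun j _ => hp j]
      exact Finset.sum_congr rfl fun j _ => hpI j
  have htot : ∑ j, μ (Z ⁻¹' I j) = μ univ := by
    rw [hmass, hsum, measure_univ, ENNReal.ofReal_one]
  have hFZ : ∀ᵐ ω ∂μ, ∀ i, Z ω ∈ I i → F (Z ω) ∈ J i := by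
    refine ae_all_iff.2 fun i => ?_
    filter_upwards [ae_sum_Iio_lt_measure_preimage_Iic hZ hIord i] with ω hlt hZω
    have hle := measure_preimage_Iic_le_sum_Iic hZ hIord htot hZω
    rw [hmass, hμF] at hlt hle
    exact ⟨(ENNReal.ofReal_lt_ofReal_iff_of_nonneg (Finset.sum_nonneg fun j _ => hp j)).1
      (hlt hZω), (ENNReal.ofReal_le_ofReal_iff (Finset.sum_nonneg fun j _ => hp j)).1 hle⟩
  have hGJ : ∀ i, ∀ u ∈ J i, G u = v i := fun i u hu => by
    rw [hG]; exact sInf_setOf_le_discreteCDF hv hp hu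
  refine ⟨hFZ.mono fun ω h i hi => hGJ i _ (h i hi), ?_⟩
  have hFmono : Monotone F := fun x y hxy => by
    rw [hF, hF]
    exact ENNReal.toReal_mono (measure_ne_top μ _) (measure_mono fun ω h => le_trans h hxy)
  rw [map_eq_sum_smul_dirac_of_ae_subset (E := fun i => (fun ω => F (Z ω)) ⁻¹' J i)
    (fun i => (hFmono.measurable.comp hZ) measurableSet_Ioc)
    (fun i j hij => (pairwise_disjoint_Ioc_sum_Iio_sum_Iic hp hij).preimage _)
    (fun i => hFZ.mono fun ω h hZω => h i hZω) htot fun i ω hω => hGJ i _ hω]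
  exact Finset.sum_congr rfl fun i _ => by rw [← hpI i]; rfl

/-- Let `Z` have continuous CDF `F` with law supported on pairwise disjoint
intervals `I 1, …, I m` ordered left to right, `P(Z ∈ I i) = p i`, `∑ p i = 1`, and let
`v i ∈ I i`.  If `G` is the generalized inverse of the CDF of the discrete measure
`∑ p i δ_{v i}`, then almost surely `G (F Z) = v i` on `{Z ∈ I i}`; in particular the law of
`G (F Z)` is `∑ p i δ_{v i}`. -/
theorem genInv_comp_cdf_eq_values
    {Ω : Type*} [MeasurableSpace Ω] (μ : Measure Ω) [IsProbabilityMeasure μ]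
    (Z : Ω → ℝ) (hZ : Measurable Z) (m : ℕ)
    (I : Fin m → Set ℝ)
    (hIord : ∀ i j : Fin m, i < j → ∀ x ∈ I i, ∀ y ∈ I j, x < y)
    (p : Fin m → ℝ) (hp : ∀ i, 0 ≤ p i) (hsum : ∑ i, p i = 1)
    (hpI : ∀ i, μ {ω | Z ω ∈ I i} = ENNReal.ofReal (p i))
    (v : Fin m → ℝ) (hv : StrictMono v) (hvI : ∀ i, v i ∈ I i)
    (F : ℝ → ℝ) (hF : ∀ x, F x = (μ {ω | Z ω ≤ x}).toReal) (hFcont : Continuous F)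
    (G : ℝ → ℝ)
    (hG : ∀ u, G u = sInf {x : ℝ |
      u ≤ ∑ i ∈ Finset.univ.filter (fun i => v i ≤ x), p i}) :
    (∀ᵐ ω ∂μ, ∀ i, Z ω ∈ I i → G (F (Z ω)) = v i) ∧
      Measure.map (fun ω => G (F (Z ω))) μ
        = ∑ i, ENNReal.ofReal (p i) • Measure.dirac (v i) :=
  genInv_comp_cdf_eq_values_general μ Z hZ m I hIord p hp hsum hpI v hv F hF G hG
end

section
/- Let (Ω, P) be a probability space carrying a random variable X with values in a finite set 𝒳 and random variables E and M with values in {0,1}. Assume positivity: P(X = x, M = m) > 0 and P(E = 1, M = m) > 0 for all x ∈ 𝒳 and m ∈ {0,1}. Assume E and M are conditionally independent given X, in the sense that P(E = 1 | X = x, M = m) = P(E = 1 | X = x) for all x and m. Then for every x ∈ 𝒳, P(X = x | E = 1, M = 1) = [P(E = 1 | M = 0) / P(E = 1 | M = 1)] · P(X = x | E = 1, M = 0) · [P(X = x | M = 1) / P(X = x | M = 0)]; i.e., the enrolled-population distribution in the new market is proportional to the enrolled-population distribution in the existing market times the ratio of market covariate distributions, with proportionality constant independent of x. -/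
open MeasureTheory

/-- Read `aₘ, bₘ, eₘ, mₘ` as `P(E=1, X=x, M=m)`, `P(X=x, M=m)`, `P(E=1, M=m)`, `P(M=m)`;
then `h` is the conditional independence of `E` and `M` given `X = x`. -/
theorem market_shift_of_div_eq_div {K : Type*} [Field K] {a₀ a₁ b₀ b₁ e₀ e₁ m₀ m₁ : K}
    (hb₀ : b₀ ≠ 0) (hb₁ : b₁ ≠ 0) (he₀ : e₀ ≠ 0) (he₁ : e₁ ≠ 0) (hm₀ : m₀ ≠ 0) (hm₁ : m₁ ≠ 0)
    (h : a₁ / b₁ = a₀ / b₀) :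
    a₁ / e₁ = (e₀ / m₀) / (e₁ / m₁) * (a₀ / e₀) * ((b₁ / m₁) / (b₀ / m₀)) := by
  rw [div_eq_div_iff hb₁ hb₀] at h
  field_simp
  linear_combination h

theorem enrolled_distribution_market_shift_general
    {Ω 𝓧 : Type*} [MeasurableSpace Ω]
    (P : Measure Ω) [IsProbabilityMeasure P]
    (X : Ω → 𝓧) (E M : Ω → Fin 2)
    (hposXM : ∀ (x : 𝓧) (m : Fin 2), 0 < (P {ω | X ω = x ∧ M ω = m}).toReal)
    (hposEM : ∀ m : Fin 2, 0 < (P {ω | E ω = 1 ∧ M ω = m}).toReal)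
    (hcondindep : ∀ (x : 𝓧) (m : Fin 2),
      (P {ω | E ω = 1 ∧ X ω = x ∧ M ω = m}).toReal / (P {ω | X ω = x ∧ M ω = m}).toReal
        = (P {ω | E ω = 1 ∧ X ω = x}).toReal / (P {ω | X ω = x}).toReal) :
    ∀ x : 𝓧,
      (P {ω | X ω = x ∧ E ω = 1 ∧ M ω = 1}).toReal / (P {ω | E ω = 1 ∧ M ω = 1}).toReal
        = (((P {ω | E ω = 1 ∧ M ω = 0}).toReal / (P {ω | M ω = 0}).toReal)
            / ((P {ω | E ω = 1 ∧ M ω = 1}).toReal / (P {ω | M ω = 1}).toReal))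
          * ((P {ω | X ω = x ∧ E ω = 1 ∧ M ω = 0}).toReal
              / (P {ω | E ω = 1 ∧ M ω = 0}).toReal)
          * (((P {ω | X ω = x ∧ M ω = 1}).toReal / (P {ω | M ω = 1}).toReal)
              / ((P {ω | X ω = x ∧ M ω = 0}).toReal / (P {ω | M ω = 0}).toReal)) := by
  intro x
  have hposM (m : Fin 2) : 0 < (P {ω | M ω = m}).toReal :=
    (hposXM x m).trans_le <| measureReal_mono fun _ hω => hω.2
  have hreorder (m : Fin 2) :
      {ω | X ω = x ∧ E ω = 1 ∧ M ω = m} = {ω | E ω = 1 ∧ X ω = x ∧ M ω = m} :=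
    Set.ext fun _ => and_left_comm
  rw [hreorder 0, hreorder 1]
  exact market_shift_of_div_eq_div (hposXM x 0).ne' (hposXM x 1).ne' (hposEM 0).ne'
    (hposEM 1).ne' (hposM 0).ne' (hposM 1).ne' ((hcondindep x 1).trans (hcondindep x 0).symm)

/-- Market-shift Bayes identity: if `E` and `M` are conditionally
independent given `X` (i.e. `P(E=1 | X=x, M=m) = P(E=1 | X=x)`), then the enrolled
distribution in the new market satisfies
`P(X=x | E=1, M=1) = [P(E=1|M=0)/P(E=1|M=1)] · P(X=x | E=1, M=0) · [P(X=x|M=1)/P(X=x|M=0)]`. -/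
theorem enrolled_distribution_market_shift
    {Ω 𝓧 : Type*} [MeasurableSpace Ω] [Fintype 𝓧]
    (P : Measure Ω) [IsProbabilityMeasure P]
    (X : Ω → 𝓧) (E M : Ω → Fin 2)
    (hposXM : ∀ (x : 𝓧) (m : Fin 2), 0 < (P {ω | X ω = x ∧ M ω = m}).toReal)
    (hposEM : ∀ m : Fin 2, 0 < (P {ω | E ω = 1 ∧ M ω = m}).toReal)
    (hcondindep : ∀ (x : 𝓧) (m : Fin 2),
      (P {ω | E ω = 1 ∧ X ω = x ∧ M ω = m}).toReal / (P {ω | X ω = x ∧ M ω = m}).toReal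
        = (P {ω | E ω = 1 ∧ X ω = x}).toReal / (P {ω | X ω = x}).toReal) :
    ∀ x : 𝓧,
      (P {ω | X ω = x ∧ E ω = 1 ∧ M ω = 1}).toReal / (P {ω | E ω = 1 ∧ M ω = 1}).toReal
        = (((P {ω | E ω = 1 ∧ M ω = 0}).toReal / (P {ω | M ω = 0}).toReal)
            / ((P {ω | E ω = 1 ∧ M ω = 1}).toReal / (P {ω | M ω = 1}).toReal))
          * ((P {ω | X ω = x ∧ E ω = 1 ∧ M ω = 0}).toReal
              / (P {ω | E ω = 1 ∧ M ω = 0}).toReal)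
          * (((P {ω | X ω = x ∧ M ω = 1}).toReal / (P {ω | M ω = 1}).toReal)
              / ((P {ω | X ω = x ∧ M ω = 0}).toReal / (P {ω | M ω = 0}).toReal)) :=
  enrolled_distribution_market_shift_general P X E M hposXM hposEM hcondindep
end
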